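/- Under global substitutes (all voters share a single common partition of the project set into groups of substitutes, and each voter approves a subset of the groups, A(i) being the union of the approved groups), the Substitute Rule X (SRX) mechanism satisfies Strong-BPJR with substitutes: for every PB instance with global substitutes and every group S⊆V that is T-cohesive with substitutes for some T⊆A, the output bundle B of SRX satisfies |(∪_{i∈S} A(i)) ∩ B| ≥ |T|. -/

import Mathlib

open Finset

/-- A voter's preference: a partition of her desired projects into groups of
substitutes, together with a marginal utility function per group
(`margU g j` is the marginal utility of the `j`-th funded project of group `g`). -/
structure VoterPref (A : Type*) [DecidableEq A] where
  parts : Finset (Finset A)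
  margU : Finset A → ℕ → ℝ

namespace VoterPref

variable {A : Type*} [DecidableEq A]

/-- `A(i)` : the set of desired projects of the voter. -/
def desired (v : VoterPref A) : Finset A := v.parts.sup id

/-- Well-formedness: groups are nonempty and pairwise disjoint, and marginal
utilities are nonnegative and nonincreasing. -/
def Valid (v : VoterPref A) : Prop :=
  (∀ g ∈ v.parts, g.Nonempty) ∧
  (∀ g₁ ∈ v.parts, ∀ g₂ ∈ v.parts, g₁ ≠ g₂ → Disjoint g₁ g₂) ∧
  (∀ g ∈ v.parts, ∀ j : ℕ, 0 ≤ v.margU g j) ∧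
  (∀ g ∈ v.parts, ∀ j : ℕ, v.margU g (j + 1) ≤ v.margU g j)

/-- The utility of a bundle `B`:  `u_i(B) = Σ_{g} Σ_{j=1}^{|g∩B|} u_{i,g}(j)`. -/
def util (v : VoterPref A) (B : Finset A) : ℝ :=
  ∑ g ∈ v.parts, ∑ j ∈ Finset.Icc 1 (g ∩ B).card, v.margU g j

/-- Marginal utility of project `p` given the already selected bundle `B`. -/
def margUtil (v : VoterPref A) (B : Finset A) (p : A) : ℝ :=
  v.util (insert p B) - v.util B

/-- `p₁` and `p₂` are substitutes for the voter. -/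
def sameGroup (v : VoterPref A) (p₁ p₂ : A) : Prop :=
  ∃ g ∈ v.parts, p₁ ∈ g ∧ p₂ ∈ g

end VoterPref

/-- A participatory budgeting instance `E = (V, A, cost, L)` together with the
voters' preferences. -/
structure PB (V A : Type*) [DecidableEq A] where
  cost : A → ℝ
  budget : ℝ
  pref : V → VoterPref A

noncomputable section
open scoped Classical

variable {V A : Type*} [Fintype V] [Fintype A] [DecidableEq A]

/-- `S` is `T`-cohesive with substitutes: `S` can afford `T` with its share of
the budget, every voter in `S` desires every project of `T`, and no two
distinct projects of `T` are substitutes for any voter of `S`. -/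
def TCohesiveSub (E : PB V A) (S : Finset V) (T : Finset A) : Prop :=
  (∑ p ∈ T, E.cost p) ≤ (E.budget / (Fintype.card V : ℝ)) * S.card ∧
  (∀ i ∈ S, T ⊆ (E.pref i).desired) ∧
  (∀ i ∈ S, ∀ p₁ ∈ T, ∀ p₂ ∈ T, p₁ ≠ p₂ → ¬ (E.pref i).sameGroup p₁ p₂)

/-- `p` is `q`-affordable given remaining budgets `b` and current utilities `U`. -/
def Affordable (E : PB V A) (U : V → A → ℝ) (b : V → ℝ) (p : A) (q : ℝ) : Prop :=
  0 ≤ q ∧ E.cost p ≤ ∑ i, min (b i) (U i p * q)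

/-- The minimal `q` for which `p` is `q`-affordable (junk value if none exists). -/
def qmin (E : PB V A) (U : V → A → ℝ) (b : V → ℝ) (p : A) : ℝ :=
  sInf {q | Affordable E U b p q}

/-- The set of unselected projects that are `q`-affordable for some `q`. -/
def affordSet (E : PB V A) (U : V → A → ℝ) (b : V → ℝ) (B : Finset A) : Finset A :=
  Finset.univ.filter fun p => p ∉ B ∧ ∃ q, Affordable E U b p q

/-- The project chosen at the current step: among affordable unselected
projects, minimize the minimal `q`, breaking ties by the (lexicographic)
linear order on `A`; `none` if no project is affordable. -/
def choice [LinearOrder A] (E : PB V A) (U : V → A → ℝ) (b : V → ℝ) (B : Finset A) :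
    Option A :=
  if h : (affordSet E U b B).Nonempty then
    some (((affordSet E U b B).filter fun p =>
        qmin E U b p = (affordSet E U b B).inf' h (qmin E U b)).min'
      (by
        obtain ⟨p, hp, hq⟩ := Finset.exists_mem_eq_inf' h (qmin E U b)
        exact ⟨p, Finset.mem_filter.mpr ⟨hp, hq.symm⟩⟩))
  else none

/-- The state (selected bundle, remaining budgets) of the generalized Rule X
after `t` steps, where `Ufun B i p` is the utility voter `i` assigns to project
`p` when the bundle `B` has already been selected. -/
def state [LinearOrder A] (E : PB V A) (Ufun : Finset A → V → A → ℝ) :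
    ℕ → Finset A × (V → ℝ)
  | 0 => (∅, fun _ => E.budget / (Fintype.card V : ℝ))
  | t + 1 =>
    let st := state E Ufun t
    match choice E (Ufun st.1) st.2 st.1 with
    | none => st
    | some p =>
        (insert p st.1,
          fun i => st.2 i - min (st.2 i) (Ufun st.1 i p * qmin E (Ufun st.1) st.2 p))

/-- The output of the generalized Rule X (after `|A|` steps the state is final). -/
def mechOutput [LinearOrder A] (E : PB V A) (Ufun : Finset A → V → A → ℝ) : Finset A :=
  (state E Ufun (Fintype.card A)).1

/-- SRX uses, at every step, the current marginal utilities. -/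
def srxU (E : PB V A) : Finset A → V → A → ℝ := fun B i p => (E.pref i).margUtil B p

/-- The Substitute Rule X mechanism. -/
def SRX [LinearOrder A] (E : PB V A) : Finset A := mechOutput E (srxU E)

/-- Rule X uses, throughout, utility 1 for every desired project. -/
def rxU (E : PB V A) : Finset A → V → A → ℝ :=
  fun _ i p => if p ∈ (E.pref i).desired then 1 else 0

/-- The (original) Rule X mechanism. -/
def RX [LinearOrder A] (E : PB V A) : Finset A := mechOutput E (rxU E)

/-- Global substitutes: all voters share one common partition `P` of the whole
project set, each voter approving a sub-collection of its groups. -/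
def GlobalSubs (E : PB V A) (P : Finset (Finset A)) : Prop :=
  (∀ g ∈ P, g.Nonempty) ∧
  (∀ g₁ ∈ P, ∀ g₂ ∈ P, g₁ ≠ g₂ → Disjoint g₁ g₂) ∧
  P.sup id = Finset.univ ∧
  (∀ i : V, (E.pref i).parts ⊆ P)

end

/-
Fix a `T`-cohesive group `S`. With global substitutes, the group of a project `p ∈ T` is, for
every voter of `S`, the block of the common partition containing `p`, and distinct projects of
`T` lie in distinct blocks. Along the run of SRX we keep a reserve `R ⊆ T` of projects whose
block is still untouched, with `|T| ≤ |R| + |B ∩ ⋃_{i∈S} A(i)|` and enough money left in `S` to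
buy all of `R`. A reserve project is worth `I` to every member of `S`, hence affordable. When
SRX funds a project `w` approved within `S`, at most one reserve project `p₀` has `w` in its
block, and since `w` was chosen with `q_w ≤ q_{p₀}`, the members of `S` pay for `w` no more than
`cost p₀`; dropping `p₀` restores the invariant. Projects outside `⋃_{i∈S} A(i)` cost `S`
nothing. When SRX stops nothing is affordable, so the reserve is empty.
-/

namespace VoterPref

variable {A : Type*} [DecidableEq A] {v : VoterPref A} {B g : Finset A} {p : A}

theorem margUtil_of_mem (h : p ∈ B) : v.margUtil B p = 0 := by
  rw [margUtil, insert_eq_of_mem h, sub_self]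

theorem margUtil_of_notMem_desired (h : p ∉ v.desired) : v.margUtil B p = 0 := by
  rw [margUtil, util, util, sub_eq_zero]
  refine sum_congr rfl fun g hg => ?_
  rw [inter_insert_of_notMem fun hpg : p ∈ g => h (mem_sup.2 ⟨g, hg, hpg⟩)]

theorem margUtil_of_mem_parts (hv : v.Valid) (hg : g ∈ v.parts) (hp : p ∈ g) (hpB : p ∉ B) :
    v.margUtil B p = v.margU g (#(g ∩ B) + 1) := by
  rw [margUtil, util, util, ← sum_sub_distrib, sum_eq_single g]
  · rw [inter_insert_of_mem hp, card_insert_of_notMem fun h => hpB (mem_inter.1 h).2,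
      sum_Icc_succ_top (Nat.le_add_left 1 _), add_sub_cancel_left]
  · intro g' hg' hne
    have hpg' : p ∉ g' := fun hpg' => disjoint_left.1 (hv.2.1 g' hg' g hg hne) hpg' hp
    rw [inter_insert_of_notMem hpg', sub_self]
  · exact fun h => absurd hg h

theorem margUtil_eq_zero_or_margU (hv : v.Valid) :
    v.margUtil B p = 0 ∨ ∃ g ∈ v.parts, ∃ k, v.margUtil B p = v.margU g (k + 1) := by
  by_cases hpB : p ∈ B
  · exact Or.inl (margUtil_of_mem hpB)
  by_cases hp : p ∈ v.desired
  · obtain ⟨g, hg, hpg⟩ := mem_sup.1 hp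
    exact Or.inr ⟨g, hg, _, margUtil_of_mem_parts hv hg hpg hpB⟩
  · exact Or.inl (margUtil_of_notMem_desired hp)

theorem margUtil_nonneg (hv : v.Valid) : 0 ≤ v.margUtil B p := by
  obtain h | ⟨g, hg, k, h⟩ := margUtil_eq_zero_or_margU (B := B) (p := p) hv
  · exact h.ge
  · exact h ▸ hv.2.2.1 g hg _

theorem margU_succ_le_margU_one (hv : v.Valid) (hg : g ∈ v.parts) (k : ℕ) :
    v.margU g (k + 1) ≤ v.margU g 1 :=
  antitone_nat_of_succ_le (hv.2.2.2 g hg) (Nat.le_add_left 1 k)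

theorem margUtil_le {I : ℝ} (hv : v.Valid) (hI : 0 ≤ I)
    (hfirst : ∀ g ∈ v.parts, v.margU g 1 ≤ I) : v.margUtil B p ≤ I := by
  obtain h | ⟨g, hg, k, h⟩ := margUtil_eq_zero_or_margU (B := B) (p := p) hv
  · exact h ▸ hI
  · exact h ▸ (margU_succ_le_margU_one hv hg k).trans (hfirst g hg)

end VoterPref

section RuleX

variable {V A : Type*} [Fintype V] [DecidableEq A]
  {E : PB V A} {U : V → A → ℝ} {b : V → ℝ} {B : Finset A} {p w : A}

theorem qmin_nonneg : 0 ≤ qmin E U b p :=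
  Real.sInf_nonneg fun _ hq => hq.1

theorem sum_min_mul_qmin_le_cost (hc : 0 ≤ E.cost p) :
    ∑ i, min (b i) (U i p * qmin E U b p) ≤ E.cost p := by
  obtain hQ | hQ := (qmin_nonneg : 0 ≤ qmin E U b p).eq_or_lt
  · -- this case includes the junk value `qmin = sInf ∅ = 0` of an unaffordable `p`
    rw [← hQ]
    exact (sum_nonpos fun i _ => by simp only [mul_zero, min_le_right]).trans hc
  · set Q := qmin E U b p
    -- every `q < Q` is unaffordable, and the payment is continuous in `q`
    have hbelow : Set.Ico 0 Q ⊆ {q | ∑ i, min (b i) (U i p * q) ≤ E.cost p} := by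
      intro q hq
      by_contra hlt
      have hQq : Q ≤ q :=
        csInf_le (s := {q | Affordable E U b p q}) ⟨0, fun _ hq => hq.1⟩ ⟨hq.1, (not_le.1 hlt).le⟩
      exact hQq.not_gt hq.2
    have hclosed : IsClosed {q | ∑ i, min (b i) (U i p * q) ≤ E.cost p} :=
      isClosed_le (by fun_prop) continuous_const
    refine hclosed.closure_subset_iff.2 hbelow ?_
    rw [closure_Ico hQ.ne]
    exact Set.right_mem_Icc.2 hQ.le

theorem exists_affordable_of_cost_le_sum {S : Finset V} {I : ℝ} (hI : 0 < I)
    (hb : ∀ i, 0 ≤ b i) (hU : ∀ i, 0 ≤ U i p) (hUS : ∀ i ∈ S, U i p = I)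
    (hcost : E.cost p ≤ ∑ i ∈ S, b i) : ∃ q, Affordable E U b p q := by
  have hq : 0 ≤ (∑ i, b i) / I := div_nonneg (sum_nonneg fun i _ => hb i) hI.le
  refine ⟨(∑ i, b i) / I, hq, ?_⟩
  calc E.cost p ≤ ∑ i ∈ S, b i := hcost
    _ = ∑ i ∈ S, min (b i) (U i p * ((∑ i, b i) / I)) := by
        refine sum_congr rfl fun i hi => ?_
        rw [hUS i hi, mul_div_cancel₀ _ hI.ne',
          min_eq_left (single_le_sum (fun j _ => hb j) (mem_univ i))]
    _ ≤ ∑ i, min (b i) (U i p * ((∑ i, b i) / I)) :=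
        sum_le_sum_of_subset_of_nonneg (subset_univ S) fun i _ _ =>
          le_min (hb i) (mul_nonneg (hU i) hq)

variable (E) in
noncomputable def fund (U : V → A → ℝ) (st : Finset A × (V → ℝ)) (w : A) : Finset A × (V → ℝ) :=
  (insert w st.1, fun i => st.2 i - min (st.2 i) (U i w * qmin E U st.2 w))

theorem fund_budget_nonneg (st : Finset A × (V → ℝ)) (i : V) : 0 ≤ (fund E U st w).2 i :=
  sub_nonneg.2 (min_le_left _ _)

variable [Fintype A]

theorem mem_affordSet : p ∈ affordSet E U b B ↔ p ∉ B ∧ ∃ q, Affordable E U b p q := by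
  simp [affordSet]

variable [LinearOrder A]

theorem choice_eq_some_spec (h : choice E U b B = some w) :
    w ∈ affordSet E U b B ∧ ∀ p ∈ affordSet E U b B, qmin E U b w ≤ qmin E U b p := by
  unfold choice at h
  split_ifs at h with hne
  have hmem : w ∈ (affordSet E U b B).filter fun p =>
      qmin E U b p = (affordSet E U b B).inf' hne (qmin E U b) :=
    Option.some_inj.1 h ▸ min'_mem _ _
  obtain ⟨hw, hq⟩ := mem_filter.1 hmem
  exact ⟨hw, fun p hp => hq ▸ inf'_le _ hp⟩

theorem affordSet_eq_empty_of_choice_eq_none (h : choice E U b B = none) :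
    affordSet E U b B = ∅ := by
  unfold choice at h
  split_ifs at h with hne
  exact not_nonempty_iff_eq_empty.1 hne

theorem sum_min_mul_qmin_le_cost_of_choice_eq_some {S : Finset V}
    (h : choice E U b B = some w) (hp : p ∈ affordSet E U b B) (hc : 0 ≤ E.cost p)
    (hb : ∀ i, 0 ≤ b i) (hU : ∀ i, 0 ≤ U i p) (hUS : ∀ i ∈ S, U i w ≤ U i p) :
    ∑ i ∈ S, min (b i) (U i w * qmin E U b w) ≤ E.cost p :=
  calc ∑ i ∈ S, min (b i) (U i w * qmin E U b w)
      ≤ ∑ i ∈ S, min (b i) (U i p * qmin E U b p) :=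
        sum_le_sum fun i hi => min_le_min le_rfl <|
          mul_le_mul (hUS i hi) ((choice_eq_some_spec h).2 p hp) qmin_nonneg (hU i)
    _ ≤ ∑ i, min (b i) (U i p * qmin E U b p) :=
        sum_le_sum_of_subset_of_nonneg (subset_univ S) fun i _ _ =>
          le_min (hb i) (mul_nonneg (hU i) qmin_nonneg)
    _ ≤ E.cost p := sum_min_mul_qmin_le_cost hc

variable (E) (Ufun : Finset A → V → A → ℝ)

theorem state_induction (Inv : Finset A × (V → ℝ) → Prop)
    (h0 : Inv (∅, fun _ => E.budget / (Fintype.card V : ℝ)))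
    (hstep : ∀ st w, Inv st → choice E (Ufun st.1) st.2 st.1 = some w →
      Inv (fund E (Ufun st.1) st w)) (t : ℕ) :
    Inv (state E Ufun t) := by
  induction t with
  | zero => exact h0
  | succ t ih =>
    rw [state]
    split
    next => exact ih
    next w hsome => exact hstep _ w ih hsome

/-- Every step funds a new project. -/
theorem affordSet_state_card_eq_empty :
    affordSet E (Ufun (state E Ufun (Fintype.card A)).1) (state E Ufun (Fintype.card A)).2
      (state E Ufun (Fintype.card A)).1 = ∅ := by
  have key : ∀ t, t ≤ #(state E Ufun t).1 ∨
      affordSet E (Ufun (state E Ufun t).1) (state E Ufun t).2 (state E Ufun t).1 = ∅ := by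
    intro t
    induction t with
    | zero => exact Or.inl (Nat.zero_le _)
    | succ t ih =>
      rw [state]
      split
      next hnone => exact Or.inr (affordSet_eq_empty_of_choice_eq_none hnone)
      next w hsome =>
        have hw := (choice_eq_some_spec hsome).1
        refine Or.inl ?_
        rcases ih with ih | ih
        · exact (card_insert_of_notMem (mem_affordSet.1 hw).1).ge.trans' (Nat.succ_le_succ ih)
        · exact absurd hw (ih ▸ notMem_empty w)
  rcases key (Fintype.card A) with h | h
  · rw [(card_eq_iff_eq_univ _).1 (le_antisymm (card_le_univ _) h)]
    exact eq_empty_of_forall_notMem fun p hp => (mem_affordSet.1 hp).1 (mem_univ p)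
  · exact h

end RuleX

section Cohesive

variable {V A : Type*} {P : Finset (Finset A)} {B : Finset A} {p w : A}

def BlockUntouched (P : Finset (Finset A)) (B : Finset A) (p : A) : Prop :=
  ∀ g ∈ P, p ∈ g → Disjoint g B

theorem BlockUntouched.notMem {g : Finset A} (hu : BlockUntouched P B p) (hg : g ∈ P)
    (hp : p ∈ g) : p ∉ B :=
  disjoint_left.1 (hu g hg hp) hp

variable [DecidableEq A] {E : PB V A} {S : Finset V} {T : Finset A} {i : V}

theorem BlockUntouched.insert (hu : BlockUntouched P B p) (hw : ∀ g ∈ P, p ∈ g → w ∉ g) :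
    BlockUntouched P (insert w B) p :=
  fun g hg hp => disjoint_insert_right.2 ⟨hw g hg hp, hu g hg hp⟩

def approvedBy (E : PB V A) (S : Finset V) : Finset A :=
  S.biUnion fun i => (E.pref i).desired

theorem VoterPref.margUtil_eq_of_blockUntouched {v : VoterPref A} {I : ℝ} (hv : v.Valid)
    (hvP : v.parts ⊆ P) (hfirst : ∀ g ∈ v.parts, v.margU g 1 = I) (hp : p ∈ v.desired)
    (hu : BlockUntouched P B p) : v.margUtil B p = I := by
  obtain ⟨g, hg, hpg⟩ := mem_sup.1 hp
  rw [v.margUtil_of_mem_parts hv hg hpg (hu.notMem (hvP hg) hpg),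
    disjoint_iff_inter_eq_empty.1 (hu g (hvP hg) hpg), card_empty, hfirst g hg]

theorem GlobalSubs.mem_parts [Fintype A] {g : Finset A} (hglobal : GlobalSubs E P) (hg : g ∈ P)
    (hpg : p ∈ g) (hp : p ∈ (E.pref i).desired) : g ∈ (E.pref i).parts := by
  obtain ⟨g', hg', hpg'⟩ := mem_sup.1 hp
  obtain rfl : g' = g := by
    by_contra hne
    exact disjoint_left.1 (hglobal.2.1 g' (hglobal.2.2.2 i hg') g hg hne) hpg' hpg
  exact hg'

theorem TCohesiveSub.nonempty [Fintype V] (hcost : ∀ p, 0 < E.cost p) (hco : TCohesiveSub E S T)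
    (hT : T.Nonempty) : S.Nonempty := by
  rw [nonempty_iff_ne_empty]
  rintro rfl
  have hle := hco.1
  rw [card_empty, Nat.cast_zero, mul_zero] at hle
  exact (sum_pos (fun p _ => hcost p) hT).not_ge hle

theorem TCohesiveSub.notMem_block [Fintype V] [Fintype A] {g : Finset A} {p₁ p₂ : A}
    (hglobal : GlobalSubs E P) (hco : TCohesiveSub E S T) (hi : i ∈ S) (hp₁ : p₁ ∈ T)
    (hp₂ : p₂ ∈ T) (hne : p₁ ≠ p₂) (hg : g ∈ P) (hp₁g : p₁ ∈ g) : p₂ ∉ g := fun hp₂g =>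
  hco.2.2 i hi p₁ hp₁ p₂ hp₂ hne ⟨g, hglobal.mem_parts hg hp₁g (hco.2.1 i hi hp₁), hp₁g, hp₂g⟩

theorem TCohesiveSub.block_subset_approvedBy [Fintype V] [Fintype A] {g : Finset A}
    (hglobal : GlobalSubs E P) (hco : TCohesiveSub E S T) (hi : i ∈ S) (hp : p ∈ T)
    (hg : g ∈ P) (hpg : p ∈ g) : g ⊆ approvedBy E S := fun _ hx =>
  mem_biUnion.2 ⟨i, hi, mem_sup.2 ⟨g, hglobal.mem_parts hg hpg (hco.2.1 i hi hp), hx⟩⟩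

/-- `R` collects the projects of `T` still owed to `S` at the state `st = (B, b)`. -/
structure IsReserve (E : PB V A) (P : Finset (Finset A)) (S : Finset V) (T : Finset A)
    (st : Finset A × (V → ℝ)) (R : Finset A) : Prop where
  subset : R ⊆ T
  untouched : ∀ p ∈ R, BlockUntouched P st.1 p
  card_le : #T ≤ #R + #(st.1 ∩ approvedBy E S)
  cost_le : ∑ p ∈ R, E.cost p ≤ ∑ i ∈ S, st.2 i

theorem TCohesiveSub.isReserve [Fintype V] (hco : TCohesiveSub E S T) :
    IsReserve E P S T (∅, fun _ => E.budget / (Fintype.card V : ℝ)) T where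
  subset := subset_rfl
  untouched _ _ _ _ _ := disjoint_empty_right _
  card_le := by simp
  cost_le := by simpa [mul_comm] using hco.1

namespace IsReserve

variable {R : Finset A} {st : Finset A × (V → ℝ)} {b' : V → ℝ}

theorem insert_of_notMem_approvedBy [Fintype V] [Fintype A] (hglobal : GlobalSubs E P)
    (hco : TCohesiveSub E S T) (hi : i ∈ S) (hR : IsReserve E P S T st R)
    (hw : w ∉ approvedBy E S) (hb' : ∀ i ∈ S, b' i = st.2 i) :
    IsReserve E P S T (insert w st.1, b') R where
  subset := hR.subset
  untouched p hp := (hR.untouched p hp).insert fun _ hg hpg hwg =>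
    hw (hco.block_subset_approvedBy hglobal hi (hR.subset hp) hg hpg hwg)
  card_le := by simpa [insert_inter_of_notMem hw] using hR.card_le
  cost_le := (sum_congr rfl hb').symm ▸ hR.cost_le

theorem insert_of_eq_empty (hR : IsReserve E P S T st ∅) (hb' : ∀ i, 0 ≤ b' i) :
    IsReserve E P S T (insert w st.1, b') ∅ where
  subset := empty_subset T
  untouched := by simp
  card_le := hR.card_le.trans <| Nat.add_le_add_left
    (card_le_card (inter_subset_inter_right (subset_insert w st.1))) _
  cost_le := by simpa using sum_nonneg fun i _ => hb' i

theorem insert_erase {p₀ : A} (hR : IsReserve E P S T st R) (hwB : w ∉ st.1)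
    (hw : w ∈ approvedBy E S) (hp₀ : p₀ ∈ R) (hsep : ∀ p ∈ R, p ≠ p₀ → ∀ g ∈ P, p ∈ g → w ∉ g)
    (hpay : ∑ i ∈ S, (st.2 i - b' i) ≤ E.cost p₀) :
    IsReserve E P S T (insert w st.1, b') (R.erase p₀) where
  subset := (erase_subset p₀ R).trans hR.subset
  untouched p hp := (hR.untouched p (mem_of_mem_erase hp)).insert
    (hsep p (mem_of_mem_erase hp) (ne_of_mem_erase hp))
  card_le := by
    have hcard := card_erase_add_one hp₀
    rw [insert_inter_of_mem hw, card_insert_of_notMem fun h => hwB (mem_inter.1 h).1]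
    linarith [hR.card_le]
  cost_le := by
    rw [sum_sub_distrib] at hpay
    linarith [sum_erase_add R E.cost hp₀, hR.cost_le]

/-- `w` lies in the block of at most one reserve project, as distinct projects of `T` lie in
distinct blocks. -/
theorem exists_forall_ne_notMem_block [Fintype V] [Fintype A] (hglobal : GlobalSubs E P)
    (hco : TCohesiveSub E S T) (hi : i ∈ S) (hR : IsReserve E P S T st R)
    (hRne : R.Nonempty) :
    ∃ p₀ ∈ R, ∀ p ∈ R, p ≠ p₀ → ∀ g ∈ P, p ∈ g → w ∉ g := by
  by_cases hhit : ∃ p₀ ∈ R, ∃ g₀ ∈ P, p₀ ∈ g₀ ∧ w ∈ g₀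
  · obtain ⟨p₀, hp₀, g₀, hg₀, hp₀g₀, hwg₀⟩ := hhit
    refine ⟨p₀, hp₀, fun p hp hne g hg hpg hwg => ?_⟩
    obtain rfl : g = g₀ := by
      by_contra hgne
      exact disjoint_left.1 (hglobal.2.1 g hg g₀ hg₀ hgne) hwg hwg₀
    exact hco.notMem_block hglobal hi (hR.subset hp) (hR.subset hp₀) hne hg hpg hp₀g₀
  · push Not at hhit
    obtain ⟨p₀, hp₀⟩ := hRne
    exact ⟨p₀, hp₀, fun p hp _ => hhit p hp⟩

end IsReserve

end Cohesive

section SRX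

variable {V A : Type*} [Fintype V] [Fintype A] [DecidableEq A] {E : PB V A}
  {P : Finset (Finset A)} {S : Finset V} {T R : Finset A} {I : ℝ} {i : V} {p w : A}
  {st : Finset A × (V → ℝ)}

namespace IsReserve

theorem srxU_eq (hvalid : ∀ i, (E.pref i).Valid)
    (hfirst : ∀ i, ∀ g ∈ (E.pref i).parts, (E.pref i).margU g 1 = I)
    (hglobal : GlobalSubs E P) (hco : TCohesiveSub E S T) (hR : IsReserve E P S T st R)
    (hp : p ∈ R) (hi : i ∈ S) : srxU E st.1 i p = I :=
  (E.pref i).margUtil_eq_of_blockUntouched (hvalid i) (hglobal.2.2.2 i) (hfirst i)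
    (hco.2.1 i hi (hR.subset hp)) (hR.untouched p hp)

theorem notMem (hglobal : GlobalSubs E P) (hco : TCohesiveSub E S T) (hi : i ∈ S)
    (hR : IsReserve E P S T st R) (hp : p ∈ R) : p ∉ st.1 := by
  obtain ⟨g, hg, hpg⟩ := mem_sup.1 (hco.2.1 i hi (hR.subset hp))
  exact (hR.untouched p hp).notMem (hglobal.2.2.2 i hg) hpg

theorem mem_affordSet_srxU (hcost : ∀ p, 0 ≤ E.cost p) (hvalid : ∀ i, (E.pref i).Valid)
    (hI : 0 < I) (hfirst : ∀ i, ∀ g ∈ (E.pref i).parts, (E.pref i).margU g 1 = I)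
    (hglobal : GlobalSubs E P) (hco : TCohesiveSub E S T) (hi : i ∈ S)
    (hb : ∀ i, 0 ≤ st.2 i) (hR : IsReserve E P S T st R) (hp : p ∈ R) :
    p ∈ affordSet E (srxU E st.1) st.2 st.1 :=
  mem_affordSet.2 ⟨hR.notMem hglobal hco hi hp,
    exists_affordable_of_cost_le_sum hI hb (fun j => VoterPref.margUtil_nonneg (hvalid j))
      (fun _ hj => hR.srxU_eq hvalid hfirst hglobal hco hp hj)
      ((single_le_sum (fun q _ => hcost q) hp).trans hR.cost_le)⟩

variable [LinearOrder A] in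
theorem exists_fund_srxU (hcost : ∀ p, 0 ≤ E.cost p) (hvalid : ∀ i, (E.pref i).Valid)
    (hI : 0 < I) (hfirst : ∀ i, ∀ g ∈ (E.pref i).parts, (E.pref i).margU g 1 = I)
    (hglobal : GlobalSubs E P) (hco : TCohesiveSub E S T) (hi : i ∈ S)
    (hb : ∀ i, 0 ≤ st.2 i) (hR : IsReserve E P S T st R)
    (hw : choice E (srxU E st.1) st.2 st.1 = some w) :
    ∃ R', IsReserve E P S T (fund E (srxU E st.1) st w) R' := by
  by_cases hwS : w ∈ approvedBy E S
  · rcases R.eq_empty_or_nonempty with rfl | hRne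
    · exact ⟨∅, hR.insert_of_eq_empty (fund_budget_nonneg st)⟩
    obtain ⟨p₀, hp₀, hsep⟩ := hR.exists_forall_ne_notMem_block (w := w) hglobal hco hi hRne
    have hpay := sum_min_mul_qmin_le_cost_of_choice_eq_some (S := S) hw
      (hR.mem_affordSet_srxU hcost hvalid hI hfirst hglobal hco hi hb hp₀) (hcost p₀) hb
      (fun j => VoterPref.margUtil_nonneg (hvalid j)) fun j hj =>
        (hR.srxU_eq hvalid hfirst hglobal hco hp₀ hj).symm ▸
          VoterPref.margUtil_le (hvalid j) hI.le fun g hg => (hfirst j g hg).le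
    refine ⟨R.erase p₀, hR.insert_erase (mem_affordSet.1 (choice_eq_some_spec hw).1).1 hwS
      hp₀ hsep ?_⟩
    simpa only [fund, sub_sub_cancel] using hpay
  · refine ⟨R, hR.insert_of_notMem_approvedBy hglobal hco hi hwS fun j hj => ?_⟩
    have hzero : srxU E st.1 j w = 0 :=
      VoterPref.margUtil_of_notMem_desired fun hwj => hwS (mem_biUnion.2 ⟨j, hj, hwj⟩)
    simp only [hzero, zero_mul, min_eq_right (hb j), sub_zero]

end IsReserve

end SRX

theorem srx_StrongBPJR_under_global_substitutes_general
    {V A : Type*} [Fintype V] [Fintype A] [DecidableEq A] [LinearOrder A]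
    (E : PB V A) (P : Finset (Finset A)) (I : ℝ)
    (hcost : ∀ p : A, 0 < E.cost p)
    (hbudget : 0 < E.budget)
    (hvalid : ∀ i : V, (E.pref i).Valid)
    (hI : 0 < I)
    (hfirst : ∀ i : V, ∀ g ∈ (E.pref i).parts, (E.pref i).margU g 1 = I)
    (hglobal : GlobalSubs E P)
    (S : Finset V) (T : Finset A)
    (hco : TCohesiveSub E S T) :
    T.card ≤ ((S.biUnion fun i => (E.pref i).desired) ∩ SRX E).card := by
  rcases T.eq_empty_or_nonempty with rfl | hT
  · simp
  obtain ⟨i, hi⟩ := hco.nonempty hcost hT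
  have hcost' : ∀ p, 0 ≤ E.cost p := fun p => (hcost p).le
  obtain ⟨hb, R, hR⟩ := state_induction E (srxU E)
    (fun st => (∀ i, 0 ≤ st.2 i) ∧ ∃ R, IsReserve E P S T st R)
    ⟨fun _ => div_nonneg hbudget.le (Nat.cast_nonneg _), T, hco.isReserve⟩
    (fun st _ ⟨hb, _, hR⟩ hw => ⟨fund_budget_nonneg st,
      hR.exists_fund_srxU hcost' hvalid hI hfirst hglobal hco hi hb hw⟩)
    (Fintype.card A)
  obtain rfl : R = ∅ := eq_empty_of_forall_notMem fun p hp => by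
    simpa [affordSet_state_card_eq_empty] using
      hR.mem_affordSet_srxU hcost' hvalid hI hfirst hglobal hco hi hb hp
  simpa [inter_comm, approvedBy, SRX, mechOutput] using hR.card_le

/-- Under global substitutes, SRX satisfies Strong-BPJR with substitutes: for
every PB instance with global substitutes and every group `S` that is
`T`-cohesive with substitutes, the SRX output `B` satisfies
`|(∪_{i∈S} A(i)) ∩ B| ≥ |T|`. -/
theorem srx_StrongBPJR_under_global_substitutes
    {V A : Type*} [Fintype V] [Fintype A] [DecidableEq A] [LinearOrder A]
    (E : PB V A) (P : Finset (Finset A)) (I : ℝ)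
    (hV : 0 < Fintype.card V)
    (hcost : ∀ p : A, 0 < E.cost p)
    (hbudget : 0 < E.budget)
    (hvalid : ∀ i : V, (E.pref i).Valid)
    (hI : 0 < I)
    (hfirst : ∀ i : V, ∀ g ∈ (E.pref i).parts, (E.pref i).margU g 1 = I)
    (hglobal : GlobalSubs E P)
    (S : Finset V) (T : Finset A)
    (hco : TCohesiveSub E S T) :
    T.card ≤ ((S.biUnion fun i => (E.pref i).desired) ∩ SRX E).card :=
  srx_StrongBPJR_under_global_substitutes_general E P I hcost hbudget hvalid hI hfirst hglobal S T
    hco
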